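/- arXiv:1410.7530 — 3 statements merged into one kernel-verified Lean document; each statement's English description precedes it below -/
import Mathlib

section
/- Let f : ℕ → ℚ be defined by f(0) = 0 and, for n ≥ 1, f(n) = f(n-1) + 1 + (1/n) * ∑_{i=0}^{n-1} f(i). Then for all n, f(n) = ∑_{k=1}^{n} (1/k!) * C(n,k), where C(n,k) is the binomial coefficient. -/
/-!
Write `a n` for the closed form. By the hockey-stick identity `∑ i < n, C(i, k) = C(n, k + 1)`, the
partial sums `∑ i < n + 1, a i` equal `∑ k, C(n + 1, k + 2) / (k + 1)!`. Pascal's rule gives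
`a (n + 1) - a n - 1 = ∑ k, C(n, k + 1) / (k + 2)!`, and `(n + 1) C(n, k + 1) = (k + 2) C(n + 1, k + 2)`
turns `n + 1` times this into the same sum. So `a` satisfies the recurrence, and strong induction
identifies it with `f`.
-/

open Finset Nat

def chooseDivFactorialSum (n : ℕ) : ℚ :=
  ∑ k ∈ Icc 1 n, (1 / (Nat.factorial k : ℚ)) * (n.choose k)

lemma sum_range_choose_eq_choose_succ (n k : ℕ) :
    ∑ i ∈ range n, i.choose k = n.choose (k + 1) := by
  induction n with
  | zero => simp
  | succ n ih => rw [sum_range_succ, ih, choose_succ_succ', add_comm]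

-- Since `n.choose (k + 1) = 0` for `k ≥ n`, any `N ≥ n` works, so sums for different `n` can share
-- one index range.
lemma chooseDivFactorialSum_eq_sum_range {n N : ℕ} (h : n ≤ N) :
    chooseDivFactorialSum n = ∑ k ∈ range N, (n.choose (k + 1) : ℚ) / (k + 1)! := by
  calc chooseDivFactorialSum n = ∑ k ∈ range n, (n.choose (k + 1) : ℚ) / (k + 1)! := by
        rw [chooseDivFactorialSum, ← Ico_add_one_right_eq_Icc, sum_Ico_eq_sum_range,
          add_tsub_cancel_right]
        exact sum_congr rfl fun k _ => by rw [add_comm 1 k, one_div_mul_eq_div]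
    _ = _ := sum_subset (range_subset_range.2 h) fun k _ hk => by
        rw [choose_eq_zero_of_lt (by simp at hk; omega), cast_zero, zero_div]

lemma sum_range_chooseDivFactorialSum (n : ℕ) :
    ∑ i ∈ range n, chooseDivFactorialSum i = ∑ k ∈ range n, (n.choose (k + 2) : ℚ) / (k + 1)! := by
  calc ∑ i ∈ range n, chooseDivFactorialSum i
      = ∑ i ∈ range n, ∑ k ∈ range n, (i.choose (k + 1) : ℚ) / (k + 1)! :=
        sum_congr rfl fun i hi => chooseDivFactorialSum_eq_sum_range (mem_range.1 hi).le
    _ = ∑ k ∈ range n, (∑ i ∈ range n, (i.choose (k + 1) : ℚ)) / (k + 1)! := by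
        rw [sum_comm]; simp_rw [sum_div]
    _ = _ := by simp_rw [← cast_sum, sum_range_choose_eq_choose_succ]

lemma chooseDivFactorialSum_succ_sub (n : ℕ) :
    chooseDivFactorialSum (n + 1) - chooseDivFactorialSum n - 1 =
      ∑ k ∈ range n, (n.choose (k + 1) : ℚ) / (k + 2)! := by
  calc chooseDivFactorialSum (n + 1) - chooseDivFactorialSum n - 1
      = ∑ k ∈ range (n + 1), (n.choose k : ℚ) / (k + 1)! - 1 := by
        rw [chooseDivFactorialSum_eq_sum_range le_rfl,
          chooseDivFactorialSum_eq_sum_range n.le_succ, ← sum_sub_distrib]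
        congr 1
        refine sum_congr rfl fun k _ => ?_
        rw [choose_succ_succ', cast_add]
        ring
    _ = _ := by simp [sum_range_succ']

lemma add_one_mul_choose_div_factorial (n k : ℕ) :
    (n + 1 : ℚ) * ((n.choose (k + 1) : ℚ) / (k + 2)!) = ((n + 1).choose (k + 2) : ℚ) / (k + 1)! := by
  have h : ((n + 1 : ℕ) * n.choose (k + 1) : ℚ) = (n + 1).choose (k + 2) * (k + 2 : ℕ) := by
    exact_mod_cast add_one_mul_choose_eq n (k + 1)
  rw [factorial_succ (k + 1)]
  push_cast at h ⊢
  field_simp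
  linear_combination h

lemma chooseDivFactorialSum_succ (n : ℕ) :
    chooseDivFactorialSum (n + 1) = chooseDivFactorialSum n + 1 +
      1 / (n + 1 : ℚ) * ∑ i ∈ range (n + 1), chooseDivFactorialSum i := by
  have h : (n + 1 : ℚ) * (chooseDivFactorialSum (n + 1) - chooseDivFactorialSum n - 1) =
      ∑ i ∈ range (n + 1), chooseDivFactorialSum i := by
    rw [chooseDivFactorialSum_succ_sub, mul_sum, sum_range_chooseDivFactorialSum, sum_range_succ,
      choose_eq_zero_of_lt (by omega : n + 1 < n + 2), cast_zero, zero_div, add_zero]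
    exact sum_congr rfl fun k _ => add_one_mul_choose_div_factorial n k
  rw [← h]
  field_simp
  ring

theorem stmt_0 (f : ℕ → ℚ)
    (h0 : f 0 = 0)
    (hrec : ∀ n : ℕ, 1 ≤ n →
      f n = f (n - 1) + 1 + (1 / (n : ℚ)) * ∑ i ∈ Finset.range n, f i) :
    ∀ n : ℕ, f n = ∑ k ∈ Finset.Icc 1 n, (1 / (Nat.factorial k : ℚ)) * (n.choose k) := by
  suffices h : ∀ n, f n = chooseDivFactorialSum n from h
  intro n
  induction n using Nat.strong_induction_on with
  | _ n ih =>
    rcases n with _ | n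
    · simp [h0, chooseDivFactorialSum]
    · rw [hrec (n + 1) n.succ_pos, add_tsub_cancel_right,
        sum_congr rfl fun i hi => ih i (mem_range.1 hi), ih n n.lt_succ_self,
        chooseDivFactorialSum_succ, cast_add_one]
end

section
/- There exist constants c > 0 and N₀ such that for all n ≥ N₀, with p = ⌊√n⌋, we have (1/2) * (1/p!) * C(n,p) ≥ exp(c * √n). -/
open Nat Real

/-! With `p = ⌊√n⌋` we have `p * p ≤ n`, hence `p ^ p ≤ C(n, p)`, while the upper Stirling bound
`p! ≤ e √p (p/e)^p` (monotonicity of the Stirling sequence) and `√p ≤ e^{(p-1)/2}` give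
`p ^ p / p! ≥ e^{(p-1)/2}`. As `√n < p + 1`, this exceeds `2 e^{√n/4}` as soon as `p ≥ 7`. -/

theorem Nat.pow_le_choose_of_mul_le {m k n : ℕ} (h : m * k ≤ n) : m ^ k ≤ n.choose k := by
  refine Nat.le_of_mul_le_mul_left ?_ k.factorial_pos
  have hprod : k ! * m ^ k = ∏ i ∈ Finset.range k, (k - i) * m := by
    rw [Finset.prod_mul_distrib, ← Nat.descFactorial_eq_prod_range, Nat.descFactorial_self,
      Finset.prod_const, Finset.card_range]
  rw [hprod, ← Nat.descFactorial_eq_factorial_mul_choose, Nat.descFactorial_eq_prod_range]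
  refine Finset.prod_le_prod' fun i hi => ?_
  rw [Finset.mem_range] at hi
  rcases Nat.eq_zero_or_pos m with rfl | hm
  · simp
  · have hi_le : i ≤ i * m := Nat.le_mul_of_pos_right i hm
    have him_le : i * m ≤ k * m := Nat.mul_le_mul_right m hi.le
    rw [Nat.sub_mul, Nat.mul_comm k m]
    omega

theorem Stirling.factorial_le_exp_one_mul_sqrt_mul_pow {n : ℕ} (hn : n ≠ 0) :
    (n ! : ℝ) ≤ exp 1 * √n * (n / exp 1) ^ n := by
  have hseq : stirlingSeq n ≤ exp 1 / √2 := by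
    obtain ⟨m, rfl⟩ := Nat.exists_eq_succ_of_ne_zero hn
    exact stirlingSeq_one ▸ stirlingSeq'_antitone (Nat.zero_le m)
  rw [stirlingSeq, div_le_div_iff₀ (by positivity) (by positivity)] at hseq
  calc (n ! : ℝ) = n ! * √2 / √2 := by field_simp
    _ ≤ exp 1 * (√(2 * n) * (n / exp 1) ^ n) / √2 := by gcongr
    _ = exp 1 * √n * (n / exp 1) ^ n := by
      rw [Real.sqrt_mul zero_le_two]; field_simp

theorem exp_sub_one_div_two_le_pow_div_factorial {k : ℕ} (hk : k ≠ 0) :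
    exp ((k - 1) / 2) ≤ (k : ℝ) ^ k / k ! := by
  rw [le_div_iff₀ (by positivity)]
  have hsqrt : √k ≤ exp ((k - 1) / 2) := by
    rw [Real.exp_half]
    exact Real.sqrt_le_sqrt (by linarith [Real.add_one_le_exp ((k : ℝ) - 1)])
  calc exp ((k - 1) / 2) * k ! ≤ exp ((k - 1) / 2) * (exp 1 * √k * (k / exp 1) ^ k) := by
        gcongr; exact Stirling.factorial_le_exp_one_mul_sqrt_mul_pow hk
    _ ≤ exp ((k - 1) / 2) * (exp 1 * exp ((k - 1) / 2) * (k / exp 1) ^ k) := by gcongr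
    _ = exp ((k - 1) / 2 + (1 + (k - 1) / 2)) * k ^ k / exp k := by
      rw [div_pow, ← Real.exp_nat_mul, mul_one, exp_add, exp_add]; ring
    _ = (k : ℝ) ^ k := by ring_nf; field_simp

theorem stmt_10 :
    ∃ c : ℝ, 0 < c ∧ ∃ N₀ : ℕ, ∀ n : ℕ, N₀ ≤ n →
      (1 / 2 : ℝ) * (1 / (Nat.factorial (Nat.sqrt n) : ℝ)) * (n.choose (Nat.sqrt n) : ℝ) ≥
        Real.exp (c * Real.sqrt n) := by
  refine ⟨1 / 4, by norm_num, 7 * 7, fun n hn => ?_⟩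
  set p := Nat.sqrt n
  have hp : 7 ≤ p := Nat.le_sqrt.2 hn
  have hchoose : (p : ℝ) ^ p ≤ n.choose p := mod_cast Nat.pow_le_choose_of_mul_le (Nat.sqrt_le n)
  have hratio := exp_sub_one_div_two_le_pow_div_factorial (k := p) (by omega)
  have htwo : 2 ≤ exp ((p - 3) / 4) := by
    have : (7 : ℝ) ≤ p := mod_cast hp
    linarith [add_one_le_exp 1, exp_le_exp.2 (show (1 : ℝ) ≤ (p - 3) / 4 by linarith)]
  calc exp (1 / 4 * √n) ≤ exp ((p + 1) / 4) := by
        gcongr; linarith [real_sqrt_le_nat_sqrt_succ (a := n)]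
    _ = exp ((p - 1) / 2) / exp ((p - 3) / 4) := by rw [← exp_sub]; ring_nf
    _ ≤ exp ((p - 1) / 2) / 2 := by gcongr
    _ ≤ 1 / 2 * (p ^ p / p !) := by linarith
    _ = 1 / 2 * (1 / p !) * p ^ p := by ring
    _ ≤ 1 / 2 * (1 / p !) * n.choose p := by gcongr
end

section
/- Define f : ℕ → ℚ by f(0)=0 and f(n) = f(n-1) + 1 + (1/n)∑_{i=0}^{n-1} f(i). For a permutation σ of [n] and N ⊆ [n], define g(∅,σ) = 0 and g(N,σ) = g(N\{i},σ) + 1 + g(N ∩ [i-1],σ) where i is the element of N minimizing σ. Then the average of g([n],σ) over all permutations σ of [n] equals f(n). -/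
/-!
`g M σ` depends only on the order of the values of `σ` on `M`. Composing `σ` with the cycle of the
values `σ(M)` that brings `σ i` down to the minimum and lifts the smaller values one step does not
change the order on `M \ {i}`; hence, among the permutations with a given order on `M \ {i}`,
`σ i` takes each rank in `σ(M)` equally often. So conditioning on `i` being the argmin of `σ` on
`M` leaves the order on `M \ {i}` uniform, and the recursion for `g` with strong induction on `M`
gives `∑ σ, g M σ = n! * f #M`, the rank in `M` of the argmin `i` being uniform on `0, …, #M - 1`.
-/

open Finset Equiv

theorem Fin.strictMonoOn_cycleRange {n : ℕ} (j : Fin n) :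
    StrictMonoOn (Fin.cycleRange j) {j}ᶜ := by
  have val_eq : ∀ l ≠ j, (Fin.cycleRange j l : ℕ) = if l < j then (l : ℕ) + 1 else l := by
    intro l hl
    rcases hl.lt_or_gt with h | h
    · rw [if_pos h, Fin.coe_cycleRange_of_lt h]
    · rw [if_neg (lt_asymm h), Fin.cycleRange_of_gt h]
  intro a ha b hb hab
  rw [Fin.lt_def, val_eq a ha, val_eq b hb]
  rw [Set.mem_compl_singleton_iff, ← Fin.val_ne_iff] at ha hb
  rw [Fin.lt_def] at hab
  simp only [Fin.lt_def]
  split_ifs <;> omega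

namespace Finset

variable {α : Type*} [LinearOrder α] {s : Finset α}

theorem card_filter_lt_orderEmbOfFin (j : Fin #s) :
    #{b ∈ s | b < s.orderEmbOfFin rfl j} = j := by
  set e := s.orderEmbOfFin rfl
  have hs : s = univ.map e.toEmbedding := (s.map_orderEmbOfFin_univ rfl).symm
  calc #{b ∈ s | b < e j} = #{b ∈ univ.map e.toEmbedding | b < e j} :=
        congrArg (fun t => #{b ∈ t | b < e j}) hs
    _ = j := by simp [filter_map, filter_gt_eq_Iio]

theorem card_filter_lt_eq_iff {a : α} (ha : a ∈ s) (k : Fin #s) :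
    #{b ∈ s | b < a} = k ↔ a = s.orderEmbOfFin rfl k := by
  obtain ⟨j, rfl⟩ : a ∈ Set.range (s.orderEmbOfFin rfl) := by
    rwa [range_orderEmbOfFin]
  rw [card_filter_lt_orderEmbOfFin, Fin.val_inj, (s.orderEmbOfFin rfl).injective.eq_iff]

/-- For `k < #s`, the cycle sending the `k`-th smallest element of `s` to the smallest one and
every smaller element of `s` to the next one in `s`; it fixes everything else. -/
def rotateToMin (s : Finset α) (k : ℕ) : Perm α :=
  if hk : k < #s then (Fin.cycleRange ⟨k, hk⟩).extendDomain (s.orderIsoOfFin rfl).toEquiv else 1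

variable {k : ℕ}

theorem rotateToMin_apply_of_notMem {x : α} (hx : x ∉ s) : s.rotateToMin k x = x := by
  unfold rotateToMin
  split_ifs
  · exact Perm.extendDomain_apply_not_subtype _ _ hx
  · rfl

theorem rotateToMin_mem {x : α} (hx : x ∈ s) : s.rotateToMin k x ∈ s := by
  by_contra h
  rw [(s.rotateToMin k).injective (rotateToMin_apply_of_notMem h)] at h
  exact h hx

theorem rotateToMin_orderEmbOfFin (hk : k < #s) (j : Fin #s) :
    s.rotateToMin k (s.orderEmbOfFin rfl j) =
      s.orderEmbOfFin rfl (Fin.cycleRange ⟨k, hk⟩ j) := by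
  rw [rotateToMin, dif_pos hk]
  exact Perm.extendDomain_apply_image _ _ _

theorem card_filter_lt_lt_card {a : α} (ha : a ∈ s) : #{b ∈ s | b < a} < #s :=
  card_lt_card (filter_ssubset.mpr ⟨a, ha, lt_irrefl a⟩)

theorem rotateToMin_le {a x : α} (ha : a ∈ s) (hrank : #{b ∈ s | b < a} = k) (hx : x ∈ s) :
    s.rotateToMin k a ≤ x := by
  have hk : k < #s := hrank ▸ card_filter_lt_lt_card ha
  obtain ⟨j, rfl⟩ : x ∈ Set.range (s.orderEmbOfFin rfl) := by rwa [range_orderEmbOfFin]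
  rw [(card_filter_lt_eq_iff ha ⟨k, hk⟩).mp hrank, rotateToMin_orderEmbOfFin hk,
    OrderEmbedding.le_iff_le, Fin.le_def, Fin.coe_cycleRange_of_le le_rfl, if_pos rfl]
  exact Nat.zero_le _

theorem rotateToMin_le_iff {a b c : α} (ha : a ∈ s) (hrank : #{b ∈ s | b < a} = k)
    (hb : b ∈ s) (hc : c ∈ s) (hba : b ≠ a) (hca : c ≠ a) :
    s.rotateToMin k b ≤ s.rotateToMin k c ↔ b ≤ c := by
  have hk : k < #s := hrank ▸ card_filter_lt_lt_card ha
  rw [(card_filter_lt_eq_iff ha ⟨k, hk⟩).mp hrank] at hba hca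
  obtain ⟨j, rfl⟩ : b ∈ Set.range (s.orderEmbOfFin rfl) := by rwa [range_orderEmbOfFin]
  obtain ⟨l, rfl⟩ : c ∈ Set.range (s.orderEmbOfFin rfl) := by rwa [range_orderEmbOfFin]
  rw [rotateToMin_orderEmbOfFin hk, rotateToMin_orderEmbOfFin hk, OrderEmbedding.le_iff_le,
    OrderEmbedding.le_iff_le]
  exact (Fin.strictMonoOn_cycleRange _).le_iff_le (fun h => hba (congrArg _ h))
    (fun h => hca (congrArg _ h))

theorem card_filter_lt_rotateToMin_inv (hk : k < #s) {m : α} (hm : m ∈ s)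
    (hmin : ∀ x ∈ s, m ≤ x) : #{b ∈ s | b < (s.rotateToMin k)⁻¹ m} = k := by
  set a := s.orderEmbOfFin rfl ⟨k, hk⟩
  have ha : a ∈ s := orderEmbOfFin_mem _ _ _
  have hrank : #{b ∈ s | b < a} = k := card_filter_lt_orderEmbOfFin _
  have : s.rotateToMin k a = m :=
    le_antisymm (rotateToMin_le ha hrank hm) (hmin _ (rotateToMin_mem ha))
  rwa [Perm.inv_eq_iff_eq.mpr this.symm]

theorem sum_card_filter_lt {β : Type*} [AddCommMonoid β] (s : Finset α) (h : ℕ → β) :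
    ∑ a ∈ s, h #{b ∈ s | b < a} = ∑ r ∈ range #s, h r := by
  set e := s.orderEmbOfFin rfl
  calc ∑ a ∈ s, h #{b ∈ s | b < a} = ∑ a ∈ univ.map e.toEmbedding, h #{b ∈ s | b < a} := by
        rw [map_orderEmbOfFin_univ]
    _ = ∑ r ∈ range #s, h r := by
        simp only [sum_map, RelEmbedding.coe_toEmbedding, e, card_filter_lt_orderEmbOfFin,
          Fin.sum_univ_eq_sum_range]

end Finset

theorem Equiv.Perm.map_mul_of_forall_notMem {α : Type*} {ρ σ : Perm α} {M : Finset α}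
    (h : ∀ x ∉ M.map σ.toEmbedding, ρ x = x) :
    M.map (ρ * σ).toEmbedding = M.map σ.toEmbedding := by
  rw [show (ρ * σ).toEmbedding = σ.toEmbedding.trans ρ.toEmbedding from rfl, ← map_map]
  exact map_perm fun x hx => by_contra fun hxM => hx (h x hxM)

theorem Equiv.Perm.card_filter_apply_lt {α : Type*} [LinearOrder α] (σ : Perm α)
    (M : Finset α) (a : α) :
    #{j ∈ M | σ j < a} = #{v ∈ M.map σ.toEmbedding | v < a} := by
  rw [filter_map, card_map]
  rfl

section PermSums

variable {α β : Type*} [Fintype α] [LinearOrder α] [AddCommMonoid β]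

theorem sum_filter_rank_eq_sum_filter_rank_zero {M : Finset α} {i : α} (hi : i ∈ M)
    (F : Perm α → β)
    (hF : ∀ σ τ : Perm α, (∀ a ∈ M.erase i, ∀ b ∈ M.erase i, σ a ≤ σ b ↔ τ a ≤ τ b) →
      F σ = F τ)
    {r : ℕ} (hr : r < #M) :
    ∑ σ with #{j ∈ M | σ j < σ i} = r, F σ = ∑ σ with #{j ∈ M | σ j < σ i} = 0, F σ := by
  have hmem : ∀ (σ : Perm α) {j}, j ∈ M → σ j ∈ M.map σ.toEmbedding :=
    fun σ _ hj => mem_map_of_mem _ hj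
  have hcard : ∀ σ : Perm α, r < #(M.map σ.toEmbedding) := fun σ => by rwa [card_map]
  set ρ : Perm α → Perm α := fun σ => (M.map σ.toEmbedding).rotateToMin r
  have hmap_mul : ∀ σ, M.map (ρ σ * σ).toEmbedding = M.map σ.toEmbedding := fun σ =>
    Perm.map_mul_of_forall_notMem fun x hx => rotateToMin_apply_of_notMem hx
  have hmap_inv_mul : ∀ σ, M.map ((ρ σ)⁻¹ * σ).toEmbedding = M.map σ.toEmbedding := fun σ =>
    Perm.map_mul_of_forall_notMem fun x hx =>
      Perm.inv_eq_iff_eq.mpr (rotateToMin_apply_of_notMem hx).symm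
  have rank_zero_iff : ∀ τ : Perm α, #{j ∈ M | τ j < τ i} = 0 ↔ ∀ j ∈ M, τ i ≤ τ j := by
    simp [filter_eq_empty_iff]
  -- `ρ σ` brings `σ i`, of rank `r` in `σ(M)`, to the bottom of `σ(M)`.
  refine sum_nbij' (fun σ => ρ σ * σ) (fun τ => (ρ τ)⁻¹ * τ) ?_ ?_ ?_ ?_ ?_
  · intro σ hσ
    simp only [mem_filter, mem_univ, true_and] at hσ ⊢
    rw [Perm.card_filter_apply_lt] at hσ
    exact (rank_zero_iff _).mpr fun j hj =>
      rotateToMin_le (hmem σ hi) hσ (rotateToMin_mem (hmem σ hj))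
  · intro τ hτ
    simp only [mem_filter, mem_univ, true_and] at hτ ⊢
    rw [rank_zero_iff] at hτ
    rw [Perm.card_filter_apply_lt, hmap_inv_mul]
    refine card_filter_lt_rotateToMin_inv (hcard τ) (hmem τ hi) fun x hx => ?_
    obtain ⟨j, hj, rfl⟩ := mem_map.mp hx
    exact hτ j hj
  · intro σ _
    simp only [ρ, hmap_mul, inv_mul_cancel_left]
  · intro τ _
    simp only [ρ, hmap_inv_mul, mul_inv_cancel_left]
  · intro σ hσ
    simp only [mem_filter, mem_univ, true_and] at hσ
    rw [Perm.card_filter_apply_lt] at hσ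
    refine hF _ _ fun a ha b hb => (rotateToMin_le_iff (hmem σ hi) hσ
      (hmem σ (mem_of_mem_erase ha)) (hmem σ (mem_of_mem_erase hb)) ?_ ?_).symm
    · exact σ.injective.ne (ne_of_mem_erase ha)
    · exact σ.injective.ne (ne_of_mem_erase hb)

theorem sum_eq_card_nsmul_sum_filter_forall_le {M : Finset α} {i : α} (hi : i ∈ M)
    (F : Perm α → β)
    (hF : ∀ σ τ : Perm α, (∀ a ∈ M.erase i, ∀ b ∈ M.erase i, σ a ≤ σ b ↔ τ a ≤ τ b) →
      F σ = F τ) :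
    ∑ σ, F σ = #M • ∑ σ with ∀ j ∈ M, σ i ≤ σ j, F σ := by
  have hrank : ∀ σ ∈ (univ : Finset (Perm α)), #{j ∈ M | σ j < σ i} ∈ range #M :=
    fun σ _ => mem_range.mpr <| card_lt_card <| filter_ssubset.mpr ⟨i, hi, lt_irrefl _⟩
  rw [← sum_fiberwise_of_maps_to hrank, sum_congr rfl fun r hr =>
    sum_filter_rank_eq_sum_filter_rank_zero hi F hF (mem_range.mp hr), sum_const, card_range]
  congr 2
  ext σ
  simp [filter_eq_empty_iff]

theorem sum_eq_sum_sum_filter_forall_le {M : Finset α} (hM : M.Nonempty) (G : Perm α → β) :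
    ∑ σ, G σ = ∑ i ∈ M, ∑ σ with ∀ j ∈ M, σ i ≤ σ j, G σ := by
  simp_rw [sum_filter]
  rw [sum_comm]
  refine sum_congr rfl fun σ _ => ?_
  obtain ⟨i, hi, hmin⟩ := M.exists_min_image σ hM
  rw [sum_eq_single_of_mem i hi fun k hk hki => if_neg fun hk' =>
    hki (σ.injective (le_antisymm (hk' i hi) (hmin k hk))), if_pos hmin]

end PermSums

theorem apply_eq_of_forall_le_iff {α β : Type*} [LinearOrder α] [Zero β] [One β] [Add β]
    {g : Finset α → Perm α → β} (hg0 : ∀ σ, g ∅ σ = 0)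
    (hgrec : ∀ N σ i, i ∈ N → (∀ j ∈ N, σ i ≤ σ j) →
      g N σ = g (N.erase i) σ + 1 + g {j ∈ N | j < i} σ)
    (M : Finset α) {σ τ : Perm α} (h : ∀ a ∈ M, ∀ b ∈ M, σ a ≤ σ b ↔ τ a ≤ τ b) :
    g M σ = g M τ := by
  induction M using Finset.strongInduction generalizing σ τ with
  | _ M ih =>
    rcases M.eq_empty_or_nonempty with rfl | hM
    · rw [hg0, hg0]
    obtain ⟨i, hi, hmin⟩ := M.exists_min_image σ hM
    have hfilter : {j ∈ M | j < i} ⊂ M := filter_ssubset.mpr ⟨i, hi, lt_irrefl i⟩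
    rw [hgrec M σ i hi hmin, hgrec M τ i hi fun j hj => (h i hi j hj).mp (hmin j hj),
      ih _ (erase_ssubset hi) fun a ha b hb => h a (mem_of_mem_erase ha) b (mem_of_mem_erase hb),
      ih _ hfilter fun a ha b hb => h a (mem_of_mem_filter a ha) b (mem_of_mem_filter b hb)]

theorem sum_apply_eq_factorial_mul {α : Type*} [Fintype α] [LinearOrder α]
    {g : Finset α → Perm α → ℚ} (hg0 : ∀ σ, g ∅ σ = 0)
    (hgrec : ∀ N σ i, i ∈ N → (∀ j ∈ N, σ i ≤ σ j) →
      g N σ = g (N.erase i) σ + 1 + g {j ∈ N | j < i} σ)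
    {f : ℕ → ℚ} (hf0 : f 0 = 0)
    (hfrec : ∀ m : ℕ, 1 ≤ m → f m = f (m - 1) + 1 + (1 / (m : ℚ)) * ∑ i ∈ range m, f i)
    (M : Finset α) :
    ∑ σ, g M σ = (Fintype.card α).factorial * f #M := by
  induction M using Finset.strongInduction with
  | _ M ih =>
    rcases M.eq_empty_or_nonempty with rfl | hM
    · simp [hg0, hf0]
    have hfiber : ∀ i ∈ M, (#M : ℚ) * ∑ σ with ∀ j ∈ M, σ i ≤ σ j, g M σ =
        (Fintype.card α).factorial * (f (#M - 1) + 1 + f #{j ∈ M | j < i}) := by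
      intro i hi
      have hfilter : {j ∈ M | j < i} ⊆ M.erase i := fun j hj =>
        mem_erase.mpr ⟨(mem_filter.mp hj).2.ne, mem_of_mem_filter j hj⟩
      rw [sum_congr rfl fun σ hσ => hgrec M σ i hi (mem_filter.mp hσ).2, ← nsmul_eq_mul,
        ← sum_eq_card_nsmul_sum_filter_forall_le hi, sum_add_distrib, sum_add_distrib,
        ih _ (erase_ssubset hi), ih {j ∈ M | j < i} (filter_ssubset.mpr ⟨i, hi, lt_irrefl i⟩),
        sum_const, card_univ, Fintype.card_perm, card_erase_of_mem hi]
      · rw [nsmul_one]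
        ring
      · intro σ τ h
        rw [apply_eq_of_forall_le_iff hg0 hgrec _ h, apply_eq_of_forall_le_iff hg0 hgrec _
          fun a ha b hb => h a (hfilter ha) b (hfilter hb)]
    have hcard : (#M : ℚ) ≠ 0 := Nat.cast_ne_zero.mpr hM.card_pos.ne'
    refine mul_left_cancel₀ hcard ?_
    rw [sum_eq_sum_sum_filter_forall_le hM, mul_sum, sum_congr rfl hfiber, ← mul_sum,
      sum_add_distrib, sum_card_filter_lt M f, sum_const, nsmul_eq_mul,
      hfrec #M hM.card_pos]
    field_simp

theorem stmt_13 (n : ℕ) (f : ℕ → ℚ)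
    (hf0 : f 0 = 0)
    (hfrec : ∀ m : ℕ, 1 ≤ m →
      f m = f (m - 1) + 1 + (1 / (m : ℚ)) * ∑ i ∈ Finset.range m, f i)
    (g : Finset (Fin n) → Equiv.Perm (Fin n) → ℚ)
    (hg0 : ∀ σ : Equiv.Perm (Fin n), g ∅ σ = 0)
    (hgrec : ∀ (N : Finset (Fin n)) (σ : Equiv.Perm (Fin n)) (i : Fin n),
      i ∈ N → (∀ j ∈ N, σ i ≤ σ j) →
      g N σ = g (N.erase i) σ + 1 + g (N.filter (fun j => j < i)) σ) :
    (∑ σ : Equiv.Perm (Fin n), g Finset.univ σ) / (Nat.factorial n : ℚ) = f n := by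
  rw [sum_apply_eq_factorial_mul hg0 hgrec hf0 hfrec, card_univ, Fintype.card_fin,
    mul_div_cancel_left₀ _ (Nat.cast_ne_zero.mpr n.factorial_ne_zero)]
end
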